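/- A divisor d on a weighted multigraph G of genus g is a break divisor if and only if deg d = g and for every nonempty subset Y of vertices, Σ_{v∈Y} d_v ≥ g(Y), where g(Y) is the genus of the induced subgraph on Y. (In particular every break divisor has degree g.) -/

import Mathlib

/-!
Move the vertex weights into `d` and let `excess(Y) = d(Y) - g(Y) + 1`, where `g(Y)` is the
arithmetic genus `|E(Y)| - |Y| + 1`.

If `d` is a break divisor with spanning tree `T`, the non-tree edges inside `Y` are charged to
vertices of `Y`, and `T` has at most `|Y| - 1` edges inside `Y` (it needs `|Yᶜ|` edges to reach the
vertices outside `Y`), so `excess(Y) ≥ 1`. Applying this to each connected component of `G[Y]` and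
summing gives the bound by the genus `b₁(G[Y]) + Σ g_v`.

Conversely, `excess` is submodular. Let `A` be a smallest set of excess one containing a vertex `v`
with `d(v) > 0`; every set of excess one through `v` contains `A`, and `A` contains an edge `e` at
`v`. Deleting `e` and lowering `d(v)` by one keeps `excess ≥ 1`, so by induction on the number of
edges we reach `d = 0`. The remaining graph then has `|V| - 1` edges and is connected, because
`excess(Z) + excess(Zᶜ) = excess(V) + |δ(Z)|` forces every cut to be nonempty; it is the spanning
tree, and each deleted edge is assigned to the vertex where `d` was lowered.
-/

open Finset

variable {V E : Type} [Fintype V] [Fintype E] [DecidableEq V] [DecidableEq E]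

/-- Edges with both endpoints in `Y`. -/
def edgesIn (ends : E → V × V) (Y : Finset V) : Finset E :=
  univ.filter fun e => (ends e).1 ∈ Y ∧ (ends e).2 ∈ Y

/-- Edges with exactly one endpoint in `Y` (the cut `δ(Y)`). -/
def cutEdges (ends : E → V × V) (Y : Finset V) : Finset E :=
  univ.filter fun e => Xor ((ends e).1 ∈ Y) ((ends e).2 ∈ Y)

/-- Arithmetic genus of the subgraph induced on `Y` with the edges of `S` removed:
`g(Y \ S) = |E(Y) \ S| - |Y| + 1 + Σ_{v ∈ Y} w v`. -/
def genusOf (ends : E → V × V) (w : V → ℕ) (Y : Finset V) (S : Finset E) : ℤ :=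
  ((edgesIn ends Y) \ S).card - Y.card + 1 + ∑ v ∈ Y, (w v : ℤ)

/-- The right-hand side of the basic inequality for the pair `(S, d)`, the
polarization `h`, and the proper subcurve `Y`:
`g(Y \ S) - 1 + (h(Y)/H)(deg d + |S| + 1 - g) + |δ(Y) \ S|`. -/
def basicBound (ends : E → V × V) (w : V → ℕ) (h : V → ℤ) (S : Finset E) (d : V → ℤ)
    (Y : Finset V) : ℚ :=
  (genusOf ends w Y S : ℚ) - 1
    + ((∑ v ∈ Y, (h v : ℚ)) / (∑ v, (h v : ℚ)))
        * ((∑ v, (d v : ℚ)) + S.card + 1 - (genusOf ends w univ ∅ : ℚ))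
    + ((cutEdges ends Y) \ S).card

/-- The pair `(S, d)` is semistable with respect to the polarization `h`. -/
def Semistable (ends : E → V × V) (w : V → ℕ) (h : V → ℤ) (S : Finset E) (d : V → ℤ) : Prop :=
  ∀ Y : Finset V, Y.Nonempty → Y ≠ univ →
    (∑ v ∈ Y, (d v : ℚ)) ≤ basicBound ends w h S d Y

/-- The pair `(S, d)` is stable with respect to the polarization `h`. -/
def Stable (ends : E → V × V) (w : V → ℕ) (h : V → ℤ) (S : Finset E) (d : V → ℤ) : Prop :=
  ∀ Y : Finset V, Y.Nonempty → Y ≠ univ →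
    (∑ v ∈ Y, (d v : ℚ)) < basicBound ends w h S d Y

/-- The simple graph on the vertices of `G` in which two distinct vertices are adjacent
if some edge of the multigraph lying in `E₀` joins them. -/
def spanGraph (ends : E → V × V) (E₀ : Finset E) : SimpleGraph V where
  Adj u v := u ≠ v ∧ ∃ e ∈ E₀, ends e = (u, v) ∨ ends e = (v, u)
  symm := ⟨by
    rintro a b ⟨hne, e, he, hor⟩
    exact ⟨hne.symm, e, he, hor.symm⟩⟩
  loopless := ⟨by rintro a ⟨hne, -⟩; exact hne rfl⟩

/-- The underlying simple graph of the multigraph `G - S` obtained by deleting the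
edges in `S`. -/
def graphMinus (ends : E → V × V) (S : Finset E) : SimpleGraph V :=
  spanGraph ends (univ \ S)

/-- `T` is (the edge set of) a spanning tree of the connected multigraph `G`. -/
def IsSpanningTree (ends : E → V × V) (T : Finset E) : Prop :=
  (spanGraph ends T).Connected ∧ T.card + 1 = Fintype.card V

/-- `d` is a break divisor on the weighted multigraph `G`: there is a spanning tree `T`
and an assignment `φ` of an endpoint to each non-tree edge such that
`d = Σ_v g_v · v + Σ_{e ∉ T} φ(e)`. -/
def IsBreakDivisor (ends : E → V × V) (w : V → ℕ) (d : V → ℤ) : Prop :=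
  ∃ T : Finset E, IsSpanningTree ends T ∧
    ∃ φ : E → V, (∀ e ∈ univ \ T, φ e = (ends e).1 ∨ φ e = (ends e).2) ∧
      ∀ v, d v = (w v : ℤ) + ((univ \ T).filter fun e => φ e = v).card

/-- The simple graph induced on the vertex subset `Y`, using the edges of the multigraph
not lying in `S` with both endpoints in `Y`. -/
def inducedSG (ends : E → V × V) (Y : Finset V) (S : Finset E) :
    SimpleGraph {v : V // v ∈ Y} where
  Adj a b := a ≠ b ∧ ∃ e, e ∉ S ∧ (ends e = (a.1, b.1) ∨ ends e = (b.1, a.1))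
  symm := ⟨by
    rintro a b ⟨hne, e, he, hor⟩
    exact ⟨hne.symm, e, he, hor.symm⟩⟩
  loopless := ⟨by rintro a ⟨hne, -⟩; exact hne rfl⟩

/-- The number of connected components of the subgraph induced on `Y` minus `S`. -/
noncomputable def numComp (ends : E → V × V) (Y : Finset V) (S : Finset E) : ℕ :=
  Nat.card (inducedSG ends Y S).ConnectedComponent

/-- The (geometric, component-wise) genus of the subgraph induced on `Y`:
`g(Y) = b₁(G[Y]) + Σ_{v ∈ Y} g_v` where `b₁ = |E(Y)| - |Y| + #components`. -/
noncomputable def genusB1 (ends : E → V × V) (w : V → ℕ) (Y : Finset V) : ℤ :=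
  (edgesIn ends Y).card - Y.card + numComp ends Y ∅ + ∑ v ∈ Y, (w v : ℤ)

set_option linter.unusedSectionVars false

section Cuts

variable {ends : E → V × V} {F : Finset E}

lemma mem_edgesIn {Y : Finset V} {e : E} :
    e ∈ edgesIn ends Y ↔ (ends e).1 ∈ Y ∧ (ends e).2 ∈ Y := by
  simp [edgesIn]

lemma mem_cutEdges {Z : Finset V} {e : E} :
    e ∈ cutEdges ends Z ↔ Xor ((ends e).1 ∈ Z) ((ends e).2 ∈ Z) := by
  simp [cutEdges]

lemma exists_mem_cutEdges_of_connected (h : (spanGraph ends F).Connected) {Z : Finset V}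
    (hZ : Z.Nonempty) (hZu : Z ≠ univ) : ∃ e ∈ F, e ∈ cutEdges ends Z := by
  obtain ⟨a, ha⟩ := hZ
  obtain ⟨b, -, hb⟩ := exists_of_ssubset (ssubset_univ_iff.mpr hZu)
  obtain ⟨p⟩ := h.preconnected a b
  obtain ⟨dart, -, hx, hy⟩ := p.exists_boundary_dart (Z : Set V) ha hb
  obtain ⟨-, e, he, hxy⟩ := dart.adj
  refine ⟨e, he, mem_cutEdges.mpr ?_⟩
  rcases hxy with h | h <;> rw [h]
  exacts [Or.inl ⟨hx, hy⟩, Or.inr ⟨hx, hy⟩]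

lemma connected_of_forall_exists_mem_cutEdges [Nonempty V]
    (h : ∀ Z : Finset V, Z.Nonempty → Z ≠ univ → ∃ e ∈ F, e ∈ cutEdges ends Z) :
    (spanGraph ends F).Connected := by
  classical
  obtain ⟨a⟩ := ‹Nonempty V›
  set Z := univ.filter ((spanGraph ends F).Reachable a)
  suffices hZ : univ = Z by
    refine (SimpleGraph.connected_iff_exists_forall_reachable _).mpr ⟨a, fun b => ?_⟩
    have hb : b ∈ Z := hZ ▸ mem_univ b
    simpa [Z] using hb
  by_contra hZ
  obtain ⟨e, he, hcut⟩ := h Z ⟨a, by simp [Z]⟩ (Ne.symm hZ)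
  have hreach : (spanGraph ends F).Reachable (ends e).1 (ends e).2 := by
    by_cases heq : (ends e).1 = (ends e).2
    · rw [heq]
    · exact SimpleGraph.Adj.reachable ⟨heq, e, he, Or.inl rfl⟩
  rcases mem_cutEdges.mp hcut with ⟨h1, h2⟩ | ⟨h2, h1⟩ <;> simp only [Z, mem_filter, mem_univ,
    true_and] at h1 h2
  · exact h2 (h1.trans hreach)
  · exact h1 (h2.trans hreach.symm)

/-- Adjoin the vertices of `Yᶜ` to `Y` one at a time, each along a cut edge. -/
lemma card_compl_le_card_sdiff_edgesIn (h : (spanGraph ends F).Connected) {Y : Finset V}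
    (hY : Y.Nonempty) : #Yᶜ ≤ #(F \ edgesIn ends Y) := by
  induction hk : #Yᶜ generalizing Y with
  | zero => exact Nat.zero_le _
  | succ k ih =>
    have hYu : Y ≠ univ := by rintro rfl; simp at hk
    obtain ⟨e, heF, he⟩ := exists_mem_cutEdges_of_connected h hY hYu
    obtain ⟨x, hxY, hex⟩ : ∃ x ∉ Y, e ∈ edgesIn ends (insert x Y) := by
      rcases mem_cutEdges.mp he with ⟨h1, h2⟩ | ⟨h2, h1⟩
      · exact ⟨_, h2, mem_edgesIn.mpr ⟨mem_insert_of_mem h1, mem_insert_self _ _⟩⟩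
      · exact ⟨_, h1, mem_edgesIn.mpr ⟨mem_insert_self _ _, mem_insert_of_mem h2⟩⟩
    have hcompl : #(insert x Y)ᶜ = k := by
      have := card_compl Y
      rw [card_compl, card_insert_of_notMem hxY]
      omega
    have hsub : F \ edgesIn ends (insert x Y) ⊆ (F \ edgesIn ends Y).erase e := by
      intro f hf
      simp only [mem_sdiff, mem_erase, mem_edgesIn] at hf ⊢
      exact ⟨fun hfe => hf.2 (hfe ▸ mem_edgesIn.mp hex), hf.1, fun h' =>
        hf.2 ⟨mem_insert_of_mem h'.1, mem_insert_of_mem h'.2⟩⟩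
    have hmem : e ∈ F \ edgesIn ends Y := mem_sdiff.mpr ⟨heF, fun h' => by
      rcases mem_cutEdges.mp he with h'' | h'' <;> simp_all [mem_edgesIn]⟩
    calc k + 1 ≤ #(F \ edgesIn ends (insert x Y)) + 1 := by
          gcongr; exact ih (hY.mono (subset_insert _ _)) hcompl
      _ ≤ #((F \ edgesIn ends Y).erase e) + 1 := by gcongr
      _ = #(F \ edgesIn ends Y) := card_erase_add_one hmem

end Cuts

/-- `excess ends F d Y = d(Y) - g(Y) + 1`, where `g(Y) = |E(Y) ∩ F| - |Y| + 1` is the arithmetic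
genus of `Y` in the unweighted graph with edge set `F`. -/
def excess (ends : E → V × V) (F : Finset E) (d : V → ℤ) (Y : Finset V) : ℤ :=
  ∑ v ∈ Y, d v - #(edgesIn ends Y ∩ F) + #Y

section Excess

variable {ends : E → V × V} {F : Finset E} {d : V → ℤ}

@[simp]
lemma excess_empty : excess ends F d ∅ = 0 := by
  simp [excess, edgesIn]

lemma excess_univ : excess ends F d univ = ∑ v, d v - #F + Fintype.card V := by
  simp [excess, edgesIn]

lemma excess_nonneg (hY : ∀ Y : Finset V, Y.Nonempty → 1 ≤ excess ends F d Y) (Y : Finset V) :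
    0 ≤ excess ends F d Y := by
  rcases Y.eq_empty_or_nonempty with rfl | hne
  · exact excess_empty.ge
  · exact zero_le_one.trans (hY Y hne)

lemma nonneg_of_one_le_excess (hY : ∀ Y : Finset V, Y.Nonempty → 1 ≤ excess ends F d Y)
    (v : V) : 0 ≤ d v := by
  have h := hY {v} (singleton_nonempty v)
  simp only [excess, sum_singleton, card_singleton, Nat.cast_one] at h
  omega

lemma excess_union_add_excess_inter_le (A B : Finset V) :
    excess ends F d (A ∪ B) + excess ends F d (A ∩ B) ≤ excess ends F d A + excess ends F d B := by
  have hedges : #(edgesIn ends A ∩ F) + #(edgesIn ends B ∩ F) ≤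
      #(edgesIn ends (A ∪ B) ∩ F) + #(edgesIn ends (A ∩ B) ∩ F) := by
    have hunion : (edgesIn ends A ∩ F) ∪ (edgesIn ends B ∩ F) ⊆ edgesIn ends (A ∪ B) ∩ F := by
      intro e
      simp only [mem_union, mem_inter, mem_edgesIn]
      tauto
    have hinter : (edgesIn ends A ∩ F) ∩ (edgesIn ends B ∩ F) = edgesIn ends (A ∩ B) ∩ F := by
      ext e
      simp only [mem_inter, mem_edgesIn]
      tauto
    rw [← card_union_add_card_inter, hinter]
    gcongr
  have hcard := card_union_add_card_inter A B
  have hsum := sum_union_inter (s₁ := A) (s₂ := B) (f := d)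
  simp only [excess]
  omega

lemma excess_add_excess_compl (Z : Finset V) :
    excess ends F d Z + excess ends F d Zᶜ = excess ends F d univ + #(cutEdges ends Z ∩ F) := by
  have hedges : #(edgesIn ends Z ∩ F) + #(edgesIn ends Zᶜ ∩ F) + #(cutEdges ends Z ∩ F) = #F := by
    simp only [edgesIn, cutEdges, filter_inter, univ_inter, card_filter, ← sum_add_distrib]
    rw [card_eq_sum_ones]
    refine sum_congr rfl fun e _ => ?_
    by_cases h1 : (ends e).1 ∈ Z <;> by_cases h2 : (ends e).2 ∈ Z <;> simp [h1, h2, Xor]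
  have hsum := sum_add_sum_compl Z d
  have hcard := card_add_card_compl Z
  rw [excess_univ]
  simp only [excess]
  omega

lemma connected_of_excess (huniv : excess ends F d univ = 1)
    (hY : ∀ Y : Finset V, Y.Nonempty → 1 ≤ excess ends F d Y) : (spanGraph ends F).Connected := by
  rcases isEmpty_or_nonempty V with hV | hV
  · simp [univ_eq_empty] at huniv
  refine connected_of_forall_exists_mem_cutEdges fun Z hZ hZu => ?_
  have hcut := excess_add_excess_compl (ends := ends) (F := F) (d := d) Z
  have hZc := hY Zᶜ (nonempty_iff_ne_empty.mpr ((compl_eq_empty_iff Z).not.mpr hZu))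
  have hcard : 0 < #(cutEdges ends Z ∩ F) := by linarith [hY Z hZ]
  obtain ⟨e, he⟩ := card_pos.mp hcard
  exact ⟨e, (mem_inter.mp he).2, (mem_inter.mp he).1⟩

end Excess

section Peeling

variable {ends : E → V × V} {F : Finset E} {d : V → ℤ}

lemma excess_erase_sub_single {e : E} (he : e ∈ F) (v : V) (Y : Finset V) :
    excess ends (F.erase e) (d - Pi.single v 1) Y =
      excess ends F d Y - (if v ∈ Y then 1 else 0) + (if e ∈ edgesIn ends Y then 1 else 0) := by
  simp only [excess, Pi.sub_apply, sum_sub_distrib, sum_pi_single', inter_erase, card_erase_eq_ite,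
    mem_inter, he, and_true]
  by_cases heY : e ∈ edgesIn ends Y
  · have hpos : 0 < #(edgesIn ends Y ∩ F) := card_pos.mpr ⟨e, mem_inter.mpr ⟨heY, he⟩⟩
    simp only [heY, if_true, Nat.cast_sub hpos]
    split_ifs <;> push_cast <;> ring
  · simp only [heY, if_false]
    split_ifs <;> ring

/-- By submodularity, two sets of excess one with a common vertex meet in a set of excess one. -/
lemma exists_minimal_excess_eq_one (hY : ∀ Y : Finset V, Y.Nonempty → 1 ≤ excess ends F d Y)
    (huniv : excess ends F d univ = 1) {v₀ : V} (hv₀ : 0 < d v₀) :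
    ∃ A : Finset V, ∃ v ∈ A, 0 < d v ∧ excess ends F d A = 1 ∧
      ∀ B : Finset V, excess ends F d B = 1 → v ∈ B → A ⊆ B := by
  classical
  let tight := univ.filter fun Y : Finset V => excess ends F d Y = 1 ∧ ∃ v ∈ Y, 0 < d v
  have huniv_mem : univ ∈ tight := by simpa [tight, huniv] using ⟨v₀, hv₀⟩
  obtain ⟨A, hA, hAmin⟩ := exists_min_image tight card ⟨univ, huniv_mem⟩
  simp only [tight, mem_filter, mem_univ, true_and] at hA hAmin
  obtain ⟨hA1, v, hvA, hv⟩ := hA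
  refine ⟨A, v, hvA, hv, hA1, fun B hB1 hvB => ?_⟩
  have hvAB : v ∈ A ∩ B := mem_inter.mpr ⟨hvA, hvB⟩
  have hsub := excess_union_add_excess_inter_le (ends := ends) (F := F) (d := d) A B
  have hunion := hY (A ∪ B) ⟨v, mem_union_left B hvA⟩
  have hinter := hY (A ∩ B) ⟨v, hvAB⟩
  have hcard := hAmin (A ∩ B) ⟨by omega, v, hvAB, hv⟩
  rw [← eq_of_subset_of_card_le inter_subset_left hcard]
  exact inter_subset_right

lemma exists_mem_edgesIn_of_excess_eq_one
    (hY : ∀ Y : Finset V, Y.Nonempty → 1 ≤ excess ends F d Y) {A : Finset V}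
    (hA : excess ends F d A = 1) {v : V} (hvA : v ∈ A) (hv : 0 < d v) :
    ∃ e ∈ edgesIn ends A ∩ F, v = (ends e).1 ∨ v = (ends e).2 := by
  by_contra! hno
  have hedges : edgesIn ends (A.erase v) ∩ F = edgesIn ends A ∩ F := by
    ext e
    simp only [mem_inter, mem_edgesIn, mem_erase]
    constructor
    · rintro ⟨⟨⟨-, h1⟩, -, h2⟩, hF⟩
      exact ⟨⟨h1, h2⟩, hF⟩
    · rintro ⟨⟨h1, h2⟩, hF⟩
      have hne := hno e (mem_inter.mpr ⟨mem_edgesIn.mpr ⟨h1, h2⟩, hF⟩)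
      exact ⟨⟨⟨Ne.symm hne.1, h1⟩, Ne.symm hne.2, h2⟩, hF⟩
  have herase := excess_nonneg hY (A.erase v)
  have hcard := card_erase_add_one hvA
  simp only [excess, hedges, sum_erase_eq_sub hvA] at herase hA
  omega

lemma exists_excess_erase_sub_single (hY : ∀ Y : Finset V, Y.Nonempty → 1 ≤ excess ends F d Y)
    (huniv : excess ends F d univ = 1) {v₀ : V} (hv₀ : 0 < d v₀) :
    ∃ e ∈ F, ∃ v, (v = (ends e).1 ∨ v = (ends e).2) ∧
      ∀ Y : Finset V, Y.Nonempty → 1 ≤ excess ends (F.erase e) (d - Pi.single v 1) Y := by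
  obtain ⟨A, v, hvA, hv, hA, hAmin⟩ := exists_minimal_excess_eq_one hY huniv hv₀
  obtain ⟨e, he, hve⟩ := exists_mem_edgesIn_of_excess_eq_one hY hA hvA hv
  obtain ⟨heA, heF⟩ := mem_inter.mp he
  refine ⟨e, heF, v, hve, fun Y hYne => ?_⟩
  rw [excess_erase_sub_single heF]
  have h1 := hY Y hYne
  by_cases hvY : v ∈ Y
  · by_cases heY : e ∈ edgesIn ends Y
    · simp [hvY, heY, h1]
    · -- `Y` cannot have excess one, as it would then contain `A` and with it `e`
      have h2 : excess ends F d Y ≠ 1 := fun hY1 =>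
        heY (mem_edgesIn.mpr (by
          have := hAmin Y hY1 hvY
          exact ⟨this (mem_edgesIn.mp heA).1, this (mem_edgesIn.mp heA).2⟩))
      simp only [hvY, heY, if_true, if_false]
      omega
  · split_ifs <;> omega

end Peeling

def IsBreakDivisorOn (ends : E → V × V) (F : Finset E) (d : V → ℤ) : Prop :=
  ∃ T ⊆ F, IsSpanningTree ends T ∧ ∃ φ : E → V,
    (∀ e ∈ F \ T, φ e = (ends e).1 ∨ φ e = (ends e).2) ∧ ∀ v, d v = #((F \ T).filter (φ · = v))

section BreakDivisorOn

variable {ends : E → V × V} {F : Finset E} {d : V → ℤ}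

lemma isBreakDivisor_iff_isBreakDivisorOn (w : V → ℕ) (d : V → ℤ) :
    IsBreakDivisor ends w d ↔ IsBreakDivisorOn ends univ (fun v => d v - w v) := by
  constructor
  · rintro ⟨T, hT, φ, hφ, hd⟩
    exact ⟨T, subset_univ T, hT, φ, hφ, fun v => by simp only [hd v]; ring⟩
  · rintro ⟨T, -, hT, φ, hφ, hd⟩
    exact ⟨T, hT, φ, hφ, fun v => by rw [← hd v]; ring⟩

lemma IsBreakDivisorOn.of_erase_sub_single {e : E} (he : e ∈ F) {v : V}
    (hv : v = (ends e).1 ∨ v = (ends e).2)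
    (h : IsBreakDivisorOn ends (F.erase e) (d - Pi.single v 1)) : IsBreakDivisorOn ends F d := by
  obtain ⟨T, hTF, hT, φ, hφ, hd⟩ := h
  have heT : e ∉ T := fun heT => by simpa using hTF heT
  have hrest : e ∉ F.erase e \ T := by simp
  have hsplit : F \ T = insert e (F.erase e \ T) := by
    rw [erase_sdiff_comm, insert_erase (mem_sdiff.mpr ⟨he, heT⟩)]
  refine ⟨T, hTF.trans (erase_subset e F), hT, Function.update φ e v, fun f hf => ?_, fun x => ?_⟩
  · rcases eq_or_ne f e with rfl | hfe
    · simpa using hv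
    · rw [Function.update_of_ne hfe]
      exact hφ f (by rw [hsplit] at hf; exact (mem_insert.mp hf).resolve_left hfe)
  · have hfilter : (F.erase e \ T).filter (Function.update φ e v · = x) =
        (F.erase e \ T).filter (φ · = x) :=
      filter_congr fun f hf => by rw [Function.update_of_ne (ne_of_mem_of_not_mem hf hrest)]
    have hx := hd x
    rw [hsplit, filter_insert, Function.update_self]
    simp only [Pi.sub_apply, Pi.single_apply] at hx
    rcases eq_or_ne v x with rfl | hvx
    · simp only [if_true] at hx ⊢
      rw [card_insert_of_notMem (fun h => hrest (mem_filter.mp h).1), hfilter]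
      push_cast; omega
    · simp only [hvx, hvx.symm, if_false] at hx ⊢
      rw [hfilter]; omega

lemma isBreakDivisorOn_zero (huniv : excess ends F 0 univ = 1)
    (hY : ∀ Y : Finset V, Y.Nonempty → 1 ≤ excess ends F 0 Y) : IsBreakDivisorOn ends F 0 := by
  refine ⟨F, subset_refl F, ⟨connected_of_excess huniv hY, ?_⟩, fun e => (ends e).1, by simp, by simp⟩
  rw [excess_univ] at huniv
  simp only [Pi.zero_apply, sum_const_zero, zero_sub] at huniv
  omega

theorem IsBreakDivisorOn.of_excess (huniv : excess ends F d univ = 1)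
    (hY : ∀ Y : Finset V, Y.Nonempty → 1 ≤ excess ends F d Y) : IsBreakDivisorOn ends F d := by
  induction F using Finset.strongInduction generalizing d with
  | H F ih =>
  by_cases hd : ∃ v, 0 < d v
  · obtain ⟨v₀, hv₀⟩ := hd
    obtain ⟨e, he, v, hv, hY'⟩ := exists_excess_erase_sub_single hY huniv hv₀
    refine .of_erase_sub_single he hv (ih _ (erase_ssubset he) ?_ hY')
    rw [excess_erase_sub_single he, huniv]
    simp [edgesIn]
  · obtain rfl : d = 0 := funext fun v => le_antisymm (not_lt.mp fun h => hd ⟨v, h⟩)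
      (nonneg_of_one_le_excess hY v)
    exact isBreakDivisorOn_zero huniv hY

lemma IsSpanningTree.card_edgesIn_inter_add_one_le {T : Finset E} (hT : IsSpanningTree ends T)
    {Y : Finset V} (hY : Y.Nonempty) : #(edgesIn ends Y ∩ T) + 1 ≤ #Y := by
  have h := card_compl_le_card_sdiff_edgesIn hT.1 hY
  have hsplit := card_sdiff_add_card_inter T (edgesIn ends Y)
  rw [card_compl] at h
  rw [inter_comm] at hsplit
  have := hT.2
  have := card_le_univ Y
  omega

lemma IsBreakDivisorOn.excess_univ_eq_one (h : IsBreakDivisorOn ends F d) :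
    excess ends F d univ = 1 := by
  obtain ⟨T, hTF, hT, φ, -, hd⟩ := h
  have hsum : ∑ v, d v = #(F \ T) := by
    simp only [hd, ← Nat.cast_sum, ← card_eq_sum_card_fiberwise (fun e _ => mem_univ (φ e))]
  rw [excess_univ, hsum, card_sdiff_of_subset hTF, Nat.cast_sub (card_le_card hTF)]
  have := hT.2
  omega

lemma IsBreakDivisorOn.one_le_excess (h : IsBreakDivisorOn ends F d) {Y : Finset V}
    (hY : Y.Nonempty) : 1 ≤ excess ends F d Y := by
  obtain ⟨T, hTF, hT, φ, hφ, hd⟩ := h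
  have hsum : ∑ v ∈ Y, d v = #((F \ T).filter (φ · ∈ Y)) := by
    rw [card_eq_sum_card_fiberwise (f := φ) (t := Y) fun e he => by
      simpa using (mem_filter.mp he).2]
    push_cast
    refine sum_congr rfl fun v hv => ?_
    rw [hd v, filter_filter,
      filter_congr fun e _ => and_iff_right_of_imp fun h : φ e = v => h ▸ hv]
  have hcover : edgesIn ends Y ∩ F ⊆ (F \ T).filter (φ · ∈ Y) ∪ (edgesIn ends Y ∩ T) := by
    intro e he
    obtain ⟨heY, heF⟩ := mem_inter.mp he
    by_cases heT : e ∈ T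
    · exact mem_union_right _ (mem_inter.mpr ⟨heY, heT⟩)
    · have hmem : e ∈ F \ T := mem_sdiff.mpr ⟨heF, heT⟩
      refine mem_union_left _ (mem_filter.mpr ⟨hmem, ?_⟩)
      rcases hφ e hmem with h | h <;> rw [h]
      exacts [(mem_edgesIn.mp heY).1, (mem_edgesIn.mp heY).2]
  have hforest := hT.card_edgesIn_inter_add_one_le hY
  have hcard := (card_le_card hcover).trans (card_union_le _ _)
  simp only [excess, hsum]
  omega

end BreakDivisorOn

section Genus

variable {ends : E → V × V} {F : Finset E} {d : V → ℤ}

lemma excess_eq_sum_fiberwise {ι : Type*} [DecidableEq ι] {κ : V → ι} {Y : Finset V}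
    {s : Finset ι} (hYs : ∀ v ∈ Y, κ v ∈ s)
    (hκ : ∀ e ∈ edgesIn ends Y ∩ F, κ (ends e).1 = κ (ends e).2) :
    excess ends F d Y = ∑ i ∈ s, excess ends F d (Y.filter (κ · = i)) := by
  have hedges : ∀ i, edgesIn ends (Y.filter (κ · = i)) ∩ F =
      (edgesIn ends Y ∩ F).filter fun e => κ (ends e).1 = i := by
    intro i
    ext e
    simp only [mem_filter, mem_inter, mem_edgesIn]
    constructor
    · rintro ⟨⟨⟨h1, rfl⟩, h2, -⟩, hF⟩
      exact ⟨⟨⟨h1, h2⟩, hF⟩, rfl⟩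
    · rintro ⟨⟨⟨h1, h2⟩, hF⟩, rfl⟩
      exact ⟨⟨⟨h1, rfl⟩, h2, (hκ e (mem_inter.mpr ⟨mem_edgesIn.mpr ⟨h1, h2⟩, hF⟩)).symm⟩, hF⟩
  have hedgesMap : ∀ e ∈ edgesIn ends Y ∩ F, κ (ends e).1 ∈ s := fun e he =>
    hYs _ (mem_edgesIn.mp (mem_inter.mp he).1).1
  simp only [excess, sum_add_distrib, sum_sub_distrib, hedges, sum_fiberwise_of_maps_to hYs,
    ← Nat.cast_sum, ← card_eq_sum_card_fiberwise hYs, ← card_eq_sum_card_fiberwise hedgesMap]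

lemma one_le_numComp {Y : Finset V} (hY : Y.Nonempty) : 1 ≤ numComp ends Y ∅ := by
  obtain ⟨y, hy⟩ := hY
  have : Nonempty (inducedSG ends Y ∅).ConnectedComponent :=
    ⟨(inducedSG ends Y ∅).connectedComponentMk ⟨y, hy⟩⟩
  exact Nat.card_pos

lemma numComp_le_excess (hY : ∀ Y : Finset V, Y.Nonempty → 1 ≤ excess ends univ d Y)
    (Y : Finset V) : (numComp ends Y ∅ : ℤ) ≤ excess ends univ d Y := by
  classical
  let G := inducedSG ends Y ∅
  have : Fintype G.ConnectedComponent := Fintype.ofFinite _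
  let κ : V → Option G.ConnectedComponent := fun v =>
    if h : v ∈ Y then some (G.connectedComponentMk ⟨v, h⟩) else none
  have hκ : ∀ e ∈ edgesIn ends Y ∩ univ, κ (ends e).1 = κ (ends e).2 := by
    intro e he
    obtain ⟨h1, h2⟩ := mem_edgesIn.mp (mem_inter.mp he).1
    simp only [κ, h1, h2, dif_pos, Option.some.injEq]
    by_cases heq : (ends e).1 = (ends e).2
    · simp only [heq]
    · exact SimpleGraph.ConnectedComponent.sound
        (SimpleGraph.Adj.reachable ⟨by simpa using heq, e, notMem_empty e, Or.inl rfl⟩)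
  have hnone : Y.filter (κ · = none) = ∅ :=
    filter_eq_empty_iff.mpr fun v hv => by simp [κ, hv]
  have hsome : ∀ c, 1 ≤ excess ends univ d (Y.filter (κ · = some c)) := by
    intro c
    obtain ⟨⟨v, hv⟩, rfl⟩ := c.exists_rep
    exact hY _ ⟨v, mem_filter.mpr ⟨hv, by simp only [κ, dif_pos hv]; rfl⟩⟩
  rw [excess_eq_sum_fiberwise (s := univ) (fun v _ => mem_univ (κ v)) hκ, Fintype.sum_option,
    hnone, excess_empty, zero_add, numComp, Nat.card_eq_fintype_card, ← card_univ]
  simpa using sum_le_sum fun c (_ : c ∈ univ) => hsome c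

lemma forall_genusB1_le_iff (w : V → ℕ) (d : V → ℤ) :
    (∀ Y : Finset V, Y.Nonempty → genusB1 ends w Y ≤ ∑ v ∈ Y, d v) ↔
      ∀ Y : Finset V, Y.Nonempty → 1 ≤ excess ends univ (fun v => d v - w v) Y := by
  have hgenus : ∀ Y : Finset V, ∑ v ∈ Y, d v - genusB1 ends w Y =
      excess ends univ (fun v => d v - w v) Y - numComp ends Y ∅ := by
    intro Y
    simp only [genusB1, excess, inter_univ, sum_sub_distrib]
    ring
  constructor
  · intro h Y hY
    have := one_le_numComp (ends := ends) hY
    linarith [h Y hY, hgenus Y]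
  · intro h Y _
    linarith [numComp_le_excess h Y, hgenus Y]

lemma sum_eq_genusOf_iff (w : V → ℕ) (d : V → ℤ) :
    ∑ v, d v = genusOf ends w univ ∅ ↔ excess ends univ (fun v => d v - w v) univ = 1 := by
  simp only [excess_univ, genusOf, edgesIn, filter_true_of_mem, mem_univ, and_self, implies_true,
    sdiff_empty, card_univ, sum_sub_distrib]
  omega

end Genus

theorem stmt5_general (ends : E → V × V) (w : V → ℕ) (d : V → ℤ) :
    IsBreakDivisor ends w d ↔
      ((∑ v, d v) = genusOf ends w univ ∅ ∧
        ∀ Y : Finset V, Y.Nonempty → genusB1 ends w Y ≤ ∑ v ∈ Y, d v) := by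
  rw [isBreakDivisor_iff_isBreakDivisorOn, sum_eq_genusOf_iff, forall_genusB1_le_iff]
  exact ⟨fun h => ⟨h.excess_univ_eq_one, fun _ hY => h.one_le_excess hY⟩,
    fun h => .of_excess h.1 h.2⟩

/-- An–Baker–Kuperberg–Shokrieh; Lemma 5.9 of the paper.  A divisor `d`
on a connected weighted multigraph `G` of genus `g` is a break divisor if and only if
`deg d = g` and `Σ_{v ∈ Y} d_v ≥ g(Y)` for every nonempty subset `Y` of vertices. -/
theorem stmt5 [Nonempty V] (ends : E → V × V) (w : V → ℕ) (d : V → ℤ)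
    (hGconn : (spanGraph ends univ).Connected) :
    IsBreakDivisor ends w d ↔
      ((∑ v, d v) = genusOf ends w univ ∅ ∧
        ∀ Y : Finset V, Y.Nonempty → genusB1 ends w Y ≤ ∑ v ∈ Y, d v) :=
  stmt5_general ends w d
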